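/- Let a<0<b, λ>0, γ≥0, c: ℝ→[0,∞) continuous with ∫_ℝ c = γ, and c_ε(x)=ε⁻¹c(ε⁻¹x). Define S_ε on C[a,b] by (S_ε f)(x) = b - x + 2∫_x^b ∫_y^b (λ + c_ε(z)) f(z) dz dy. Then for every ω>0 and f,g ∈ C[a,b], ‖S_ε f - S_ε g‖_ω^⋄ ≤ 2(λ/ω² + γ/ω)·‖f-g‖_ω^⋄, where ‖h‖_ω^⋄ := max_{a≤x≤b} e^{ω(x-b)}|h(x)|. -/

import Mathlib

/-!
Write `h = f - g` and let `M` be its weighted sup norm, so `|h z| ≤ M e^{ω(b-z)}` on `[a, b]`.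
For the inner integral `∫_y^b (λ + c_ε) h`, the `λ`-part integrates the exponential and gains a
factor `1/ω`, while the `c_ε`-part is bounded by the largest value `e^{ω(b-y)}` of the weight times
the mass of `c_ε`, which by scaling is at most `∫ c = γ`. Hence the inner integral is at most
`M (λ/ω + γ) e^{ω(b-y)}`, and the outer integral over `[x, b]` gains another factor `1/ω`.
-/

open MeasureTheory Set intervalIntegral

theorem integral_exp_mul_sub (ω b y : ℝ) (hω : ω ≠ 0) :
    ∫ z in y..b, Real.exp (ω * (b - z)) = (Real.exp (ω * (b - y)) - 1) / ω := by
  rw [integral_comp_sub_left (fun u => Real.exp (ω * u)), integral_comp_mul_left _ hω,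
    integral_exp]
  simp [div_eq_inv_mul]

section ExponentialWeight

variable {ω b M : ℝ}

theorem abs_intervalIntegral_le_of_abs_le_exp {h : ℝ → ℝ} {x : ℝ} (hω : 0 < ω) (hxb : x ≤ b)
    (hbound : ∀ z ∈ Icc x b, |h z| ≤ M * Real.exp (ω * (b - z))) :
    |∫ z in x..b, h z| ≤ M * Real.exp (ω * (b - x)) / ω := by
  have hM : 0 ≤ M := by simpa using (abs_nonneg _).trans (hbound b ⟨hxb, le_rfl⟩)
  calc |∫ z in x..b, h z| ≤ ∫ z in x..b, M * Real.exp (ω * (b - z)) := by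
        rw [← Real.norm_eq_abs]
        exact norm_integral_le_of_norm_le hxb
          (Filter.Eventually.of_forall fun z hz => hbound z (Ioc_subset_Icc_self hz))
          ((by fun_prop : Continuous fun z => M * Real.exp (ω * (b - z))).intervalIntegrable x b)
    _ = M * ((Real.exp (ω * (b - x)) - 1) / ω) := by
        rw [intervalIntegral.integral_const_mul, integral_exp_mul_sub ω b x hω.ne']
    _ ≤ M * Real.exp (ω * (b - x)) / ω := by
        rw [mul_div_assoc]
        gcongr
        exact sub_le_self _ zero_le_one

theorem abs_intervalIntegral_mul_le_of_abs_le_exp {k h : ℝ → ℝ} {x : ℝ} (hω : 0 ≤ ω)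
    (hxb : x ≤ b) (hk : IntervalIntegrable k volume x b) (hk0 : ∀ z ∈ Icc x b, 0 ≤ k z)
    (hbound : ∀ z ∈ Icc x b, |h z| ≤ M * Real.exp (ω * (b - z))) :
    |∫ z in x..b, k z * h z| ≤ (∫ z in x..b, k z) * (M * Real.exp (ω * (b - x))) := by
  rw [← intervalIntegral.integral_mul_const, ← Real.norm_eq_abs]
  refine norm_integral_le_of_norm_le hxb (Filter.Eventually.of_forall fun z hz => ?_)
    (hk.mul_const _)
  have hz' := Ioc_subset_Icc_self hz
  have hM : 0 ≤ M :=
    nonneg_of_mul_nonneg_left ((abs_nonneg _).trans (hbound z hz')) (Real.exp_pos _)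
  rw [Real.norm_eq_abs, abs_mul, abs_of_nonneg (hk0 z hz')]
  gcongr
  · exact hk0 z hz'
  · exact (hbound z hz').trans (by gcongr; exact hz.1.le)

theorem abs_intervalIntegral_add_mul_le_of_abs_le_exp {k h : ℝ → ℝ} {lam y : ℝ}
    (hlam : 0 ≤ lam) (hω : 0 < ω) (hyb : y ≤ b) (hk : ContinuousOn k (Icc y b))
    (hk0 : ∀ z ∈ Icc y b, 0 ≤ k z) (hh : ContinuousOn h (Icc y b))
    (hbound : ∀ z ∈ Icc y b, |h z| ≤ M * Real.exp (ω * (b - z))) :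
    |∫ z in y..b, (lam + k z) * h z|
      ≤ M * Real.exp (ω * (b - y)) * (lam / ω + ∫ z in y..b, k z) := by
  simp_rw [add_mul]
  rw [intervalIntegral.integral_add (f := fun z => lam * h z) (g := fun z => k z * h z)
    ((continuousOn_const.mul hh).intervalIntegrable_of_Icc hyb)
    ((hk.mul hh).intervalIntegrable_of_Icc hyb), intervalIntegral.integral_const_mul]
  calc _ ≤ lam * |∫ z in y..b, h z| + |∫ z in y..b, k z * h z| :=
        (abs_add_le _ _).trans_eq (by rw [abs_mul, abs_of_nonneg hlam])
    _ ≤ lam * (M * Real.exp (ω * (b - y)) / ω)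
        + (∫ z in y..b, k z) * (M * Real.exp (ω * (b - y))) := by
        gcongr
        · exact abs_intervalIntegral_le_of_abs_le_exp hω hyb hbound
        · exact abs_intervalIntegral_mul_le_of_abs_le_exp hω.le hyb
            (hk.intervalIntegrable_of_Icc hyb) hk0 hbound
    _ = _ := by ring

theorem abs_integral_integral_add_mul_le_of_abs_le_exp {k h : ℝ → ℝ} {lam gamma x : ℝ}
    (hlam : 0 ≤ lam) (hω : 0 < ω) (hxb : x ≤ b) (hk : ContinuousOn k (Icc x b))
    (hk0 : ∀ z ∈ Icc x b, 0 ≤ k z) (hk_mass : ∀ y ∈ Icc x b, ∫ z in y..b, k z ≤ gamma)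
    (hh : ContinuousOn h (Icc x b))
    (hbound : ∀ z ∈ Icc x b, |h z| ≤ M * Real.exp (ω * (b - z))) :
    |∫ y in x..b, ∫ z in y..b, (lam + k z) * h z|
      ≤ M * (lam / ω + gamma) * Real.exp (ω * (b - x)) / ω := by
  refine abs_intervalIntegral_le_of_abs_le_exp hω hxb fun y hy => ?_
  have hyx : Icc y b ⊆ Icc x b := Icc_subset_Icc_left hy.1
  have hM : 0 ≤ M := by simpa using (abs_nonneg _).trans (hbound b ⟨hxb, le_rfl⟩)
  calc _ ≤ M * Real.exp (ω * (b - y)) * (lam / ω + ∫ z in y..b, k z) :=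
        abs_intervalIntegral_add_mul_le_of_abs_le_exp hlam hω hy.2 (hk.mono hyx)
          (fun z hz => hk0 z (hyx hz)) (hh.mono hyx) (fun z hz => hbound z (hyx hz))
    _ ≤ M * Real.exp (ω * (b - y)) * (lam / ω + gamma) := by gcongr; exact hk_mass y hy
    _ = _ := by ring

theorem abs_le_iSup_mul_exp {h : ℝ → ℝ} {a z : ℝ} (ω : ℝ) (hh : ContinuousOn h (Icc a b))
    (hz : z ∈ Icc a b) :
    |h z| ≤ (⨆ x : Icc a b, Real.exp (ω * ((x : ℝ) - b)) * |h x|) * Real.exp (ω * (b - z)) := by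
  have hbdd : BddAbove (range fun x : Icc a b => Real.exp (ω * ((x : ℝ) - b)) * |h x|) :=
    image_eq_range (fun x => Real.exp (ω * (x - b)) * |h x|) (Icc a b) ▸
      isCompact_Icc.bddAbove_image (by fun_prop)
  calc |h z| = Real.exp (ω * (z - b)) * |h z| * Real.exp (ω * (b - z)) := by
        rw [mul_comm, ← mul_assoc, ← Real.exp_add]
        ring_nf
        simp
    _ ≤ _ := by gcongr; exact le_ciSup hbdd (⟨z, hz⟩ : Icc a b)

end ExponentialWeight

section TailIntegral

variable {F G : ℝ → ℝ} {x b : ℝ}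

theorem intervalIntegrable_integral_tail (hxb : x ≤ b) (hF : IntegrableOn F (Icc x b)) :
    IntervalIntegrable (fun y => ∫ z in y..b, F z) volume x b := by
  rw [← uIcc_of_le hxb] at hF
  exact (continuousOn_primitive_interval_left hF).intervalIntegrable

theorem integral_integral_tail_sub (hxb : x ≤ b) (hF : IntegrableOn F (Icc x b))
    (hG : IntegrableOn G (Icc x b)) :
    (∫ y in x..b, ∫ z in y..b, F z) - (∫ y in x..b, ∫ z in y..b, G z)
      = ∫ y in x..b, ∫ z in y..b, (F z - G z) := by
  rw [← intervalIntegral.integral_sub (intervalIntegrable_integral_tail hxb hF)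
    (intervalIntegrable_integral_tail hxb hG)]
  refine intervalIntegral.integral_congr fun y hy => ?_
  rw [uIcc_of_le hxb] at hy
  have hyb : Icc y b ⊆ Icc x b := Icc_subset_Icc_left hy.1
  exact (intervalIntegral.integral_sub
    ((intervalIntegrable_iff_integrableOn_Icc_of_le hy.2).2 (hF.mono_set hyb))
    ((intervalIntegrable_iff_integrableOn_Icc_of_le hy.2).2 (hG.mono_set hyb))).symm

end TailIntegral

theorem intervalIntegral_rescale_le_integral {c : ℝ → ℝ} {eps y b : ℝ} (heps : 0 < eps)
    (hc : Integrable c) (hc0 : ∀ x, 0 ≤ c x) (hyb : y ≤ b) :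
    ∫ z in y..b, eps⁻¹ * c (eps⁻¹ * z) ≤ ∫ x, c x := by
  rw [intervalIntegral.integral_const_mul, integral_comp_mul_left _ (inv_ne_zero heps.ne'),
    smul_eq_mul, ← mul_assoc, mul_inv_cancel₀ (inv_ne_zero heps.ne'), one_mul,
    intervalIntegral.integral_of_le (by gcongr)]
  exact setIntegral_le_integral hc (Filter.Eventually.of_forall hc0)

theorem bielecki_estimate_S_general
    (a b lam gamma eps : ℝ) (hlam : 0 < lam)
    (hgamma : 0 ≤ gamma) (heps : 0 < eps)
    (c : ℝ → ℝ) (hc_cont : Continuous c) (hc_nonneg : ∀ x, 0 ≤ c x)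
    (hc_int : Integrable c) (hc_gamma : ∫ x, c x = gamma)
    (ceps : ℝ → ℝ) (hceps : ∀ x, ceps x = eps⁻¹ * c (eps⁻¹ * x))
    (S : (ℝ → ℝ) → (ℝ → ℝ))
    (hS : ∀ f x, S f x =
      b - x + 2 * ∫ y in x..b, ∫ z in y..b, (lam + ceps z) * f z)
    (f g : ℝ → ℝ) (hf : ContinuousOn f (Icc a b)) (hg : ContinuousOn g (Icc a b))
    (ω : ℝ) (hω : 0 < ω) :
    (⨆ x : Icc a b, Real.exp (ω * ((x : ℝ) - b)) * |S f x - S g x|)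
      ≤ 2 * (lam / ω ^ 2 + gamma / ω) *
        ⨆ x : Icc a b, Real.exp (ω * ((x : ℝ) - b)) * |f x - g x| := by
  obtain rfl : ceps = fun x => eps⁻¹ * c (eps⁻¹ * x) := funext hceps
  have hk_cont : Continuous fun z => lam + eps⁻¹ * c (eps⁻¹ * z) := by fun_prop
  set M := ⨆ x : Icc a b, Real.exp (ω * ((x : ℝ) - b)) * |f x - g x|
  have hM : 0 ≤ M := Real.iSup_nonneg fun x => by positivity
  refine Real.iSup_le (fun ⟨x, hx⟩ => ?_) (by positivity)
  have hxb : Icc x b ⊆ Icc a b := Icc_subset_Icc_left hx.1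
  have hdiff : S f x - S g x
      = 2 * ∫ y in x..b, ∫ z in y..b, (lam + eps⁻¹ * c (eps⁻¹ * z)) * (f z - g z) := by
    have h := integral_integral_tail_sub hx.2
      (hk_cont.continuousOn.mul (hf.mono hxb)).integrableOn_Icc
      (hk_cont.continuousOn.mul (hg.mono hxb)).integrableOn_Icc
    simp only [Pi.mul_apply, ← mul_sub] at h
    rw [hS, hS, ← h]
    ring
  have hbound := abs_integral_integral_add_mul_le_of_abs_le_exp (M := M)
    (h := fun z => f z - g z) hlam.le hω hx.2 (by fun_prop)
    (fun z _ => mul_nonneg (inv_nonneg.2 heps.le) (hc_nonneg _))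
    (fun y hy => hc_gamma ▸ intervalIntegral_rescale_le_integral heps hc_int hc_nonneg hy.2)
    ((hf.sub hg).mono hxb) (fun z hz => abs_le_iSup_mul_exp ω (hf.sub hg) (hxb hz))
  calc Real.exp (ω * (x - b)) * |S f x - S g x|
      ≤ Real.exp (ω * (x - b)) * (2 * (M * (lam / ω + gamma) * Real.exp (ω * (b - x)) / ω)) := by
        rw [hdiff, abs_mul, abs_two]
        gcongr
    _ = 2 * (lam / ω ^ 2 + gamma / ω) * M := by
        rw [show ω * (b - x) = -(ω * (x - b)) by ring, Real.exp_neg]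
        field_simp

/-- Bielecki-type contraction estimate for the operator `S_ε`. -/
theorem bielecki_estimate_S
    (a b lam gamma eps : ℝ) (ha : a < 0) (hb : 0 < b) (hlam : 0 < lam)
    (hgamma : 0 ≤ gamma) (heps : 0 < eps)
    (c : ℝ → ℝ) (hc_cont : Continuous c) (hc_nonneg : ∀ x, 0 ≤ c x)
    (hc_int : Integrable c) (hc_gamma : ∫ x, c x = gamma)
    (ceps : ℝ → ℝ) (hceps : ∀ x, ceps x = eps⁻¹ * c (eps⁻¹ * x))
    (S : (ℝ → ℝ) → (ℝ → ℝ))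
    (hS : ∀ f x, S f x =
      b - x + 2 * ∫ y in x..b, ∫ z in y..b, (lam + ceps z) * f z)
    (f g : ℝ → ℝ) (hf : ContinuousOn f (Icc a b)) (hg : ContinuousOn g (Icc a b))
    (ω : ℝ) (hω : 0 < ω) :
    (⨆ x : Icc a b, Real.exp (ω * ((x : ℝ) - b)) * |S f x - S g x|)
      ≤ 2 * (lam / ω ^ 2 + gamma / ω) *
        ⨆ x : Icc a b, Real.exp (ω * ((x : ℝ) - b)) * |f x - g x| :=
  bielecki_estimate_S_general a b lam gamma eps hlam hgamma heps c hc_cont hc_nonneg hc_int hc_gamma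
    ceps hceps S hS f g hf hg ω hω
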